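/- The bilinear form ⟨·,·⟩ on the centralizer 𝔞 is symmetric and invariant: for all X, Y, Z ∈ 𝔞, ⟨X,Y⟩ = ⟨Y,X⟩ and ⟨[Z,X], Y⟩ + ⟨X, [Z,Y]⟩ = 0. -/

import Mathlib

open Matrix

/-! Commuting with `e` forces a matrix to be block upper triangular for the grading by columns:
the shift `e` sends the box in column `c` to the box in column `c + 1` of the same row, so an
induction on the column shows that the entries below the block diagonal vanish. On block
triangular matrices the projection `π₀` onto the block diagonal is multiplicative, hence a Lie
algebra homomorphism `𝔞 → 𝔤₀`. The form is therefore `1/(2N)` times the pullback along `π₀` of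
the Killing form of `𝔤₀`, which is symmetric and invariant. -/

namespace Matrix

variable {ι α R : Type*}

section BlockDiagonal

def blockDiagonalPart [DecidableEq α] [Zero R] (b : ι → α) (M : Matrix ι ι R) : Matrix ι ι R :=
  of fun i j => if b i = b j then M i j else 0

variable [Fintype ι] [DecidableEq ι]

variable (R) in
def blockDiagonalSubalgebra [CommSemiring R] (b : ι → α) : Subalgebra R (Matrix ι ι R) where
  carrier := {M | ∀ i j, b i ≠ b j → M i j = 0}
  mul_mem' {M N} hM hN i j hij := (mul_apply ..).trans <| Finset.sum_eq_zero fun k _ => by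
    by_cases h : b i = b k
    · rw [hN k j (h ▸ hij), mul_zero]
    · rw [hM i k h, zero_mul]
  add_mem' hM hN i j hij := by simp [hM i j hij, hN i j hij]
  algebraMap_mem' r i j hij := by
    simp [algebraMap_eq_diagonal, diagonal_apply_ne _ (ne_of_apply_ne b hij)]

variable [CommSemiring R] {b : ι → α}

theorem blockDiagonalPart_mem [DecidableEq α] (M : Matrix ι ι R) :
    blockDiagonalPart b M ∈ blockDiagonalSubalgebra R b := fun _ _ hij => if_neg hij

theorem span_single_eq_blockDiagonalSubalgebra :
    Submodule.span R {M | ∃ i j, b i = b j ∧ M = single i j 1} =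
      Subalgebra.toSubmodule (blockDiagonalSubalgebra R b) := by
  refine le_antisymm (Submodule.span_le.2 ?_) fun M hM => ?_
  · rintro _ ⟨i, j, hij, rfl⟩
    exact fun i' j' hij' => single_apply_of_ne _ _ _ _ _ (by rintro ⟨rfl, rfl⟩; exact hij' hij)
  · rw [matrix_eq_sum_single M]
    refine Submodule.sum_mem _ fun i _ => Submodule.sum_mem _ fun j _ => ?_
    by_cases hij : b i = b j
    · rw [show single i j (M i j) = M i j • single i j 1 by simp [smul_single]]
      exact Submodule.smul_mem _ _ (Submodule.subset_span ⟨i, j, hij, rfl⟩)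
    · rw [hM i j hij, single_zero]
      exact Submodule.zero_mem _

end BlockDiagonal

theorem blockDiagonalPart_sub [DecidableEq α] [AddGroup R] (b : ι → α) (M N : Matrix ι ι R) :
    blockDiagonalPart b (M - N) = blockDiagonalPart b M - blockDiagonalPart b N := by
  ext i j
  simp only [blockDiagonalPart, of_apply, sub_apply]
  split_ifs <;> simp

theorem BlockTriangular.blockDiagonalPart_mul [LinearOrder α] [Fintype ι]
    [NonUnitalNonAssocSemiring R] {b : ι → α} {U V : Matrix ι ι R} (hU : U.BlockTriangular b)
    (hV : V.BlockTriangular b) :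
    blockDiagonalPart b (U * V) = blockDiagonalPart b U * blockDiagonalPart b V := by
  ext i j
  simp only [blockDiagonalPart, of_apply, mul_apply]
  split_ifs with hij
  · refine Finset.sum_congr rfl fun k _ => ?_
    rcases lt_trichotomy (b k) (b i) with hki | hki | hki
    · simp [hU hki, hki.ne']
    · simp [hki, hij]
    · simp [hV (hij ▸ hki : b j < b k), hki.ne]
  · exact (Finset.sum_eq_zero fun k _ => by split_ifs <;> simp_all).symm

theorem BlockTriangular.blockDiagonalPart_lie [LinearOrder α] [Fintype ι] [Ring R]
    {b : ι → α} {U V : Matrix ι ι R} (hU : U.BlockTriangular b) (hV : V.BlockTriangular b) :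
    blockDiagonalPart b ⁅U, V⁆ = ⁅blockDiagonalPart b U, blockDiagonalPart b V⁆ := by
  simp only [Ring.lie_def, blockDiagonalPart_sub, hU.blockDiagonalPart_mul hV,
    hV.blockDiagonalPart_mul hU]

theorem blockTriangular_of_commute_shift [Fintype ι] [DecidableEq ι] [Semiring R] {b : ι → ℕ}
    {adj : ι → ι → Prop} [DecidableRel adj] (adj_b : ∀ i j, adj i j → b j = b i + 1)
    (exists_adj : ∀ j, 0 < b j → ∃ i, ∀ k, adj i k ↔ k = j) {W : Matrix ι ι R}
    (hW : Commute (of fun i j => if adj i j then (1 : R) else 0) W) : W.BlockTriangular b := by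
  suffices ∀ m i j, b j = m → b j < b i → W i j = 0 from fun i j h => this _ i j rfl h
  intro m
  induction m using Nat.strong_induction_on with
  | _ m ih =>
  rintro i j rfl hji
  obtain ⟨i', hi'⟩ := exists_adj i (by omega)
  have hb_i' := adj_b _ _ ((hi' i).2 rfl)
  -- row `i'` of the shift is the unit row vector at `i`; on the other side only entries
  -- `W i' k` with `b k + 1 = b j` occur, and these vanish by induction
  calc W i j = ((of fun i j => if adj i j then (1 : R) else 0) * W) i' j := by
        simp [mul_apply, hi']
    _ = (W * of fun i j => if adj i j then (1 : R) else 0) i' j := by rw [hW.eq]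
    _ = 0 := (mul_apply ..).trans <| Finset.sum_eq_zero fun k _ => by
        by_cases hk : adj k j
        · have := adj_b _ _ hk
          rw [ih (b k) (by omega) i' k rfl (by omega), zero_mul]
        · simp [hk]

theorem sum_sum_ite_single [Fintype ι] [DecidableEq ι] [AddCommMonoidWithOne R]
    (p : ι → ι → Prop) [DecidableRel p] :
    ∑ i, ∑ j, (if p i j then single i j (1 : R) else 0) = of fun i j => if p i j then 1 else 0 := by
  rw [matrix_eq_sum_single (of _)]
  simp only [of_apply, apply_ite (single _ _), single_zero]

end Matrix

structure IsRowTableau {n N : ℕ} (lam : Fin n → ℕ) (row : Fin N → Fin n) (col : Fin N → ℕ) :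
    Prop where
  col_lt : ∀ a, col a < lam (row a)
  lt_iff : ∀ a b : Fin N, a < b ↔ row a < row b ∨ (row a = row b ∧ col a < col b)
  sum_eq : ∑ i, lam i = N

namespace IsRowTableau

variable {n N : ℕ} {lam : Fin n → ℕ} {row : Fin N → Fin n} {col : Fin N → ℕ}

theorem eq_of_row_eq_of_col_eq
    (lt_iff : ∀ a b : Fin N, a < b ↔ row a < row b ∨ (row a = row b ∧ col a < col b))
    {a b : Fin N} (hr : row a = row b) (hc : col a = col b) : a = b := by
  by_contra hne
  rcases lt_or_gt_of_ne hne with h | h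
  · simpa [hr, hc] using (lt_iff a b).1 h
  · simpa [hr, hc] using (lt_iff b a).1 h

theorem exists_row_eq_col_eq (hT : IsRowTableau lam row col) {i : Fin n} {c : ℕ}
    (hc : c < lam i) : ∃ a, row a = i ∧ col a = c := by
  let box : Fin N → Σ i, Fin (lam i) := fun a => ⟨row a, col a, hT.col_lt a⟩
  have hinj : box.Injective := fun a b hab => eq_of_row_eq_of_col_eq hT.lt_iff
    (congrArg Sigma.fst hab) (congrArg (fun p : Σ i, Fin (lam i) => (p.2 : ℕ)) hab)
  obtain ⟨a, ha⟩ := ((Fintype.bijective_iff_injective_and_card box).2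
    ⟨hinj, by simp [hT.sum_eq]⟩).2 ⟨i, c, hc⟩
  exact ⟨a, congrArg Sigma.fst ha, congrArg (fun p : Σ i, Fin (lam i) => (p.2 : ℕ)) ha⟩

theorem val_eq_succ_iff (hT : IsRowTableau lam row col) {a b : Fin N} (hr : row a = row b) :
    (b : ℕ) = a + 1 ↔ col b = col a + 1 := by
  constructor
  · intro hb
    have hab : col a < col b := by
      simpa [hr] using (hT.lt_iff a b).1 (Fin.lt_def.2 (by omega))
    by_contra hne
    obtain ⟨y, hry, hcy⟩ := hT.exists_row_eq_col_eq (i := row b) (c := col a + 1)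
      (by have := hT.col_lt b; omega)
    have h1 := (hT.lt_iff a y).2 (Or.inr ⟨hr.trans hry.symm, by omega⟩)
    have h2 := (hT.lt_iff y b).2 (Or.inr ⟨hry, by omega⟩)
    rw [Fin.lt_def] at h1 h2
    omega
  · intro hb
    have hab := (hT.lt_iff a b).2 (Or.inr ⟨hr, by omega⟩)
    by_contra hne
    let y : Fin N := ⟨a + 1, by omega⟩
    have h1 := (hT.lt_iff a y).1 (Fin.lt_def.2 (by simp [y]))
    have h2 := (hT.lt_iff y b).1 (Fin.lt_def.2 (by
      rw [Fin.lt_def] at hab; simp [y]; omega))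
    rw [hr] at h1
    rw [Fin.lt_def, Fin.ext_iff] at h1 h2
    omega

theorem blockTriangular_of_commute {R : Type*} [Semiring R] (hT : IsRowTableau lam row col)
    {W : Matrix (Fin N) (Fin N) R}
    (hW : Commute
      (Matrix.of fun a b : Fin N => if (b : ℕ) = a + 1 ∧ row a = row b then (1 : R) else 0) W) :
    W.BlockTriangular col := by
  refine Matrix.blockTriangular_of_commute_shift (fun a b h => (hT.val_eq_succ_iff h.2).1 h.1)
    (fun b hb => ?_) hW
  obtain ⟨a, hra, hca⟩ := hT.exists_row_eq_col_eq (i := row b) (c := col b - 1)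
    (by have := hT.col_lt b; omega)
  refine ⟨a, fun c => ⟨fun ⟨hc, hrc⟩ => ?_, ?_⟩⟩
  · exact eq_of_row_eq_of_col_eq hT.lt_iff (hrc.symm.trans hra) (by
      rw [(hT.val_eq_succ_iff hrc).1 hc]; omega)
  · rintro rfl
    exact ⟨(hT.val_eq_succ_iff hra).2 (by omega), hra⟩

end IsRowTableau

theorem form_symmetric_invariant_general
    (n N : ℕ)
    (lam : Fin n → ℕ)
    (hsum : ∑ i, lam i = N)
    (row : Fin N → Fin n) (col : Fin N → ℕ)
    (hcol : ∀ a, col a < lam (row a))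
    (horder : ∀ a b : Fin N, a < b ↔ (row a < row b ∨ (row a = row b ∧ col a < col b)))
    (e : Matrix (Fin N) (Fin N) ℂ)
    (he : e = ∑ a : Fin N, ∑ b : Fin N,
      if (b : ℕ) = (a : ℕ) + 1 ∧ row a = row b then single a b 1 else 0)
    (g0 : Submodule ℂ (Matrix (Fin N) (Fin N) ℂ))
    (hg0 : g0 = Submodule.span ℂ
      {M | ∃ a b : Fin N, col a = col b ∧ M = single a b 1})
    (pi0 : Matrix (Fin N) (Fin N) ℂ → Matrix (Fin N) (Fin N) ℂ)
    (hpi0 : ∀ (X : Matrix (Fin N) (Fin N) ℂ) (a b : Fin N),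
      pi0 X a b = if col a = col b then X a b else 0)
    (B : Matrix (Fin N) (Fin N) ℂ → Matrix (Fin N) (Fin N) ℂ → ℂ)
    (hB : ∀ (X Y : Matrix (Fin N) (Fin N) ℂ) (adX adY : Module.End ℂ ↥g0),
      (∀ Z : ↥g0, ((adX Z : Matrix (Fin N) (Fin N) ℂ))
          = pi0 X * (Z : Matrix (Fin N) (Fin N) ℂ)
            - (Z : Matrix (Fin N) (Fin N) ℂ) * pi0 X) →
      (∀ Z : ↥g0, ((adY Z : Matrix (Fin N) (Fin N) ℂ))
          = pi0 Y * (Z : Matrix (Fin N) (Fin N) ℂ)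
            - (Z : Matrix (Fin N) (Fin N) ℂ) * pi0 Y) →
      B X Y = (1 / (2 * (N : ℂ))) * LinearMap.trace ℂ ↥g0 (adX ∘ₗ adY)) :
    ∀ X Y Z : Matrix (Fin N) (Fin N) ℂ,
      X ∈ Subalgebra.centralizer ℂ ({e} : Set (Matrix (Fin N) (Fin N) ℂ)) →
      Y ∈ Subalgebra.centralizer ℂ ({e} : Set (Matrix (Fin N) (Fin N) ℂ)) →
      Z ∈ Subalgebra.centralizer ℂ ({e} : Set (Matrix (Fin N) (Fin N) ℂ)) →
      B X Y = B Y X ∧ B (Z * X - X * Z) Y + B X (Z * Y - Y * Z) = 0 := by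
  intro X Y Z hX hY hZ
  have hT : IsRowTableau lam row col := ⟨hcol, horder, hsum⟩
  rw [sum_sum_ite_single] at he
  have htri : ∀ W ∈ Subalgebra.centralizer ℂ {e}, W.BlockTriangular col := fun W hW =>
    hT.blockTriangular_of_commute (he ▸ hW e rfl)
  obtain rfl : pi0 = blockDiagonalPart col := funext fun W => ext (hpi0 W)
  rw [span_single_eq_blockDiagonalSubalgebra] at hg0
  subst hg0
  let L := lieSubalgebraOfSubalgebra ℂ _ (blockDiagonalSubalgebra ℂ col)
  let p (W : Matrix (Fin N) (Fin N) ℂ) : L := ⟨blockDiagonalPart col W, blockDiagonalPart_mem W⟩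
  have hB_killing : ∀ U V, B U V = (1 / (2 * (N : ℂ))) * killingForm ℂ L (p U) (p V) :=
    fun U V => hB U V _ _ (fun _ => rfl) (fun _ => rfl)
  have hp_lie : ∀ {U V}, U ∈ Subalgebra.centralizer ℂ {e} → V ∈ Subalgebra.centralizer ℂ {e} →
      p (U * V - V * U) = ⁅p U, p V⁆ := fun hU hV =>
    Subtype.ext ((htri _ hU).blockDiagonalPart_lie (htri _ hV))
  refine ⟨by rw [hB_killing, hB_killing, LieModule.traceForm_comm], ?_⟩
  rw [hB_killing, hB_killing, hp_lie hZ hX, hp_lie hZ hY, LieModule.traceForm_apply_lie_apply',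
    ← mul_add, neg_add_cancel, mul_zero]

/-- the bilinear form `⟨X,Y⟩ = (1/(2N))·tr(ad(π₀X) ∘ ad(π₀Y))` on the
centralizer `𝔞` of `e` is symmetric and invariant: for all `X, Y, Z ∈ 𝔞` we have
`⟨X,Y⟩ = ⟨Y,X⟩` and `⟨[Z,X],Y⟩ + ⟨X,[Z,Y]⟩ = 0`. -/
theorem form_symmetric_invariant
    (n N : ℕ) (hn : 0 < n)
    (lam : Fin n → ℕ) (hpos : ∀ i, 0 < lam i) (hmono : Monotone lam)
    (hsum : ∑ i, lam i = N)
    (row : Fin N → Fin n) (col : Fin N → ℕ)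
    (hcol : ∀ a, col a < lam (row a))
    (horder : ∀ a b : Fin N, a < b ↔ (row a < row b ∨ (row a = row b ∧ col a < col b)))
    (e : Matrix (Fin N) (Fin N) ℂ)
    (he : e = ∑ a : Fin N, ∑ b : Fin N,
      if (b : ℕ) = (a : ℕ) + 1 ∧ row a = row b then single a b 1 else 0)
    (g0 : Submodule ℂ (Matrix (Fin N) (Fin N) ℂ))
    (hg0 : g0 = Submodule.span ℂ
      {M | ∃ a b : Fin N, col a = col b ∧ M = single a b 1})
    (pi0 : Matrix (Fin N) (Fin N) ℂ → Matrix (Fin N) (Fin N) ℂ)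
    (hpi0 : ∀ (X : Matrix (Fin N) (Fin N) ℂ) (a b : Fin N),
      pi0 X a b = if col a = col b then X a b else 0)
    (B : Matrix (Fin N) (Fin N) ℂ → Matrix (Fin N) (Fin N) ℂ → ℂ)
    (hB : ∀ (X Y : Matrix (Fin N) (Fin N) ℂ) (adX adY : Module.End ℂ ↥g0),
      (∀ Z : ↥g0, ((adX Z : Matrix (Fin N) (Fin N) ℂ))
          = pi0 X * (Z : Matrix (Fin N) (Fin N) ℂ)
            - (Z : Matrix (Fin N) (Fin N) ℂ) * pi0 X) →
      (∀ Z : ↥g0, ((adY Z : Matrix (Fin N) (Fin N) ℂ))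
          = pi0 Y * (Z : Matrix (Fin N) (Fin N) ℂ)
            - (Z : Matrix (Fin N) (Fin N) ℂ) * pi0 Y) →
      B X Y = (1 / (2 * (N : ℂ))) * LinearMap.trace ℂ ↥g0 (adX ∘ₗ adY)) :
    ∀ X Y Z : Matrix (Fin N) (Fin N) ℂ,
      X ∈ Subalgebra.centralizer ℂ ({e} : Set (Matrix (Fin N) (Fin N) ℂ)) →
      Y ∈ Subalgebra.centralizer ℂ ({e} : Set (Matrix (Fin N) (Fin N) ℂ)) →
      Z ∈ Subalgebra.centralizer ℂ ({e} : Set (Matrix (Fin N) (Fin N) ℂ)) →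
      B X Y = B Y X ∧ B (Z * X - X * Z) Y + B X (Z * Y - Y * Z) = 0 :=
  form_symmetric_invariant_general n N lam hsum row col hcol horder e he g0 hg0 pi0 hpi0 B hB
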